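/- arXiv:2412.19249 — 8 statements merged into one kernel-verified Lean document; each statement's English description precedes it below -/
import Mathlib

section
/- For every real β with 0 ≤ β ≤ 1 and natural numbers n ≤ u, we have log₂ C(u, ⌊βn⌋) ≤ β · log₂ C(u, n) + n · log₂(e / β^β), where C denotes the binomial coefficient. -/
lemma pow_div_le_choose (n : ℕ) : ∀ u : ℕ, n ≤ u → ((u : ℝ) / n) ^ n ≤ u.choose n := by
  induction n with
  | zero => intro u _; simp
  | succ n ih =>
    intro u hu
    obtain ⟨v, rfl⟩ : ∃ v, u = v + 1 := ⟨u - 1, by omega⟩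
    have hnv : n ≤ v := by omega
    have key : ((v : ℝ) + 1) * v.choose n = ((v + 1).choose (n + 1)) * ((n : ℝ) + 1) := by
      exact_mod_cast congrArg (Nat.cast : ℕ → ℝ) (Nat.add_one_mul_choose_eq v n)
    rcases Nat.eq_zero_or_pos n with rfl | hn
    · simp
    have hn' : (0:ℝ) < n := by exact_mod_cast hn
    have hstep : ((v : ℝ) + 1) / (n + 1) ≤ (v : ℝ) / n := by
      rw [div_le_div_iff₀ (by linarith) hn']
      have : (n : ℝ) ≤ v := by exact_mod_cast hnv
      nlinarith
    have hfrac0 : (0:ℝ) ≤ ((v : ℝ) + 1) / (n + 1) := by positivity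
    push_cast
    calc (((v:ℝ) + 1) / (n + 1)) ^ (n + 1)
        = ((v:ℝ) + 1) / (n + 1) * (((v:ℝ) + 1) / (n + 1)) ^ n := by ring
      _ ≤ ((v:ℝ) + 1) / (n + 1) * ((v : ℝ) / n) ^ n := by
          exact mul_le_mul_of_nonneg_left (pow_le_pow_left₀ hfrac0 hstep n) hfrac0
      _ ≤ ((v:ℝ) + 1) / (n + 1) * v.choose n := by
          exact mul_le_mul_of_nonneg_left (ih v hnv) hfrac0
      _ = ((v + 1).choose (n + 1) : ℝ) := by
          field_simp
          linarith [key]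

lemma choose_le_epow (k u : ℕ) (hk : 1 ≤ k) (hu : 1 ≤ u) :
    (u.choose k : ℝ) ≤ (Real.exp 1 * u / k) ^ k := by
  have hk' : (0:ℝ) < k := by exact_mod_cast hk
  have hu' : (0:ℝ) < u := by exact_mod_cast hu
  have h1 : ((k:ℝ)) ^ k / (k.factorial : ℝ) ≤ Real.exp 1 ^ k := by
    calc ((k:ℝ)) ^ k / (k.factorial : ℝ) ≤ Real.exp (k:ℝ) :=
          Real.pow_div_factorial_le_exp (x := (k:ℝ)) hk'.le k
      _ = Real.exp 1 ^ k := by rw [← Real.exp_nat_mul, mul_one]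
  have h2 : ((k:ℝ)) ^ k ≤ Real.exp 1 ^ k * (k.factorial : ℝ) := by
    rw [div_le_iff₀ (by positivity)] at h1; linarith
  calc (u.choose k : ℝ) ≤ (u:ℝ) ^ k / (k.factorial : ℝ) := by exact_mod_cast Nat.choose_le_pow_div k u
    _ ≤ (Real.exp 1 * u / k) ^ k := by
        rw [div_pow, mul_pow, div_le_div_iff₀ (by positivity) (by positivity)]
        calc (u:ℝ)^k * (k:ℝ)^k ≤ (u:ℝ)^k * (Real.exp 1 ^ k * (k.factorial : ℝ)) :=
              mul_le_mul_of_nonneg_left h2 (by positivity)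
          _ = Real.exp 1 ^ k * (u:ℝ)^k * (k.factorial : ℝ) := by ring

/-- For every real β with 0 ≤ β ≤ 1 and naturals n ≤ u:
log₂ C(u, ⌊βn⌋) ≤ β·log₂ C(u,n) + n·log₂(e/β^β), with β^β = 1 when β = 0 (rpow). -/
theorem stmt0 (β : ℝ) (hβ0 : 0 ≤ β) (hβ1 : β ≤ 1) (n u : ℕ) (hnu : n ≤ u) :
    Real.logb 2 (u.choose ⌊β * (n : ℝ)⌋₊) ≤
      β * Real.logb 2 (u.choose n) +
        (n : ℝ) * Real.logb 2 (Real.exp 1 / β ^ (β : ℝ)) := by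
  have hββ1 : β ^ (β : ℝ) ≤ 1 := Real.rpow_le_one hβ0 hβ1 hβ0
  have hββ0 : 0 < β ^ (β : ℝ) := by
    rcases hβ0.eq_or_lt with rfl | h
    · simp
    · exact Real.rpow_pos_of_pos h β
  have hD1 : (1:ℝ) ≤ Real.exp 1 / β ^ (β : ℝ) := by
    rw [one_le_div hββ0]
    exact hββ1.trans (Real.one_le_exp (by norm_num))
  have hCn1 : (1:ℝ) ≤ (u.choose n : ℝ) := by
    exact_mod_cast Nat.one_le_iff_ne_zero.mpr (Nat.choose_pos hnu).ne'
  set k : ℕ := ⌊β * (n : ℝ)⌋₊ with hk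
  rcases Nat.eq_zero_or_pos k with hk0 | hk1
  · rw [hk0]
    simp only [Nat.choose_zero_right, Nat.cast_one, Real.logb_one]
    have h1 : 0 ≤ β * Real.logb 2 (u.choose n) :=
      mul_nonneg hβ0 (Real.logb_nonneg one_lt_two hCn1)
    have h2 : 0 ≤ (n:ℝ) * Real.logb 2 (Real.exp 1 / β ^ (β : ℝ)) :=
      mul_nonneg (Nat.cast_nonneg n) (Real.logb_nonneg one_lt_two hD1)
    linarith
  -- main case
  have hkβn : (k : ℝ) ≤ β * n := Nat.floor_le (by positivity)
  have hK1 : (1:ℝ) ≤ k := by exact_mod_cast hk1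
  have hβpos : 0 < β := by
    rcases hβ0.eq_or_lt with rfl | h
    · exfalso; simp [hk] at hk1
    · exact h
  have hn1 : (1:ℝ) ≤ n := by nlinarith
  have hn1' : 1 ≤ n := by exact_mod_cast hn1
  have hcn : β * n ≤ (n:ℝ) := by nlinarith
  have hnu' : (n:ℝ) ≤ u := by exact_mod_cast hnu
  have hkn : k ≤ n := by
    have : (k:ℝ) ≤ n := le_trans hkβn hcn
    exact_mod_cast this
  have hku : k ≤ u := hkn.trans hnu
  have hu1 : 1 ≤ u := hn1'.trans hnu
  have hK0 : (0:ℝ) < k := by linarith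
  have hn0 : (0:ℝ) < n := by linarith
  have hu0 : (0:ℝ) < u := by linarith
  have hc0 : (0:ℝ) < β * n := by positivity
  -- log bounds
  have hub : Real.log (u.choose k) ≤ k * Real.log (Real.exp 1 * u / k) := by
    have hb := choose_le_epow k u hk1 hu1
    have hCk1 : (1:ℝ) ≤ (u.choose k : ℝ) := by
      exact_mod_cast Nat.one_le_iff_ne_zero.mpr (Nat.choose_pos hku).ne'
    calc Real.log (u.choose k) ≤ Real.log ((Real.exp 1 * u / k) ^ k) :=
          Real.log_le_log (by linarith) hb
      _ = k * Real.log (Real.exp 1 * u / k) := by rw [Real.log_pow]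
  have hlb : (n:ℝ) * Real.log ((u:ℝ)/n) ≤ Real.log (u.choose n) := by
    have hb := pow_div_le_choose n u hnu
    calc (n:ℝ) * Real.log ((u:ℝ)/n) = Real.log (((u:ℝ)/n) ^ n) := by rw [Real.log_pow]
      _ ≤ Real.log (u.choose n) := Real.log_le_log (by positivity) hb
  -- expand logs
  have e1 : Real.log (Real.exp 1 * u / k) = 1 + Real.log u - Real.log k := by
    rw [Real.log_div (by positivity) (by positivity), Real.log_mul (Real.exp_ne_zero 1)
      (by positivity), Real.log_exp]
  have e2 : Real.log ((u:ℝ)/n) = Real.log u - Real.log n :=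
    Real.log_div (by positivity) (by positivity)
  have e3 : Real.log (Real.exp 1 / β ^ (β : ℝ)) = 1 - β * Real.log β := by
    rw [Real.log_div (Real.exp_ne_zero 1) (by positivity), Real.log_exp,
      Real.log_rpow hβpos]
  -- core inequality
  have key : Real.log (u.choose k) ≤ β * Real.log (u.choose n) +
      (n:ℝ) * Real.log (Real.exp 1 / β ^ (β : ℝ)) := by
    rw [e3]
    have hlc : Real.log (β * n) = Real.log β + Real.log n :=
      Real.log_mul (ne_of_gt hβpos) (ne_of_gt hn0)
    have hA : (k:ℝ) * (Real.log (β * n) - Real.log k) ≤ β * n - k := by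
      have h := Real.log_le_sub_one_of_pos (show (0:ℝ) < β * n / k by positivity)
      rw [Real.log_div (ne_of_gt hc0) (ne_of_gt hK0)] at h
      have := mul_le_mul_of_nonneg_left h hK0.le
      have hne : (k:ℝ) ≠ 0 := ne_of_gt hK0
      calc (k:ℝ) * (Real.log (β * n) - Real.log k) ≤ k * (β * n / k - 1) := this
        _ = β * n - k := by field_simp
    have hB : (k:ℝ) * (Real.log u - Real.log (β * n)) ≤
        (β * n) * (Real.log u - Real.log (β * n)) := by
      have hlog : 0 ≤ Real.log u - Real.log (β * n) := by
        have := Real.log_le_log hc0 (le_trans hcn hnu')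
        linarith
      nlinarith
    have hB' : β * (n * Real.log ((u:ℝ)/n)) ≤ β * Real.log (u.choose n) :=
      mul_le_mul_of_nonneg_left hlb hβ0
    rw [e2] at hB'
    rw [hlc] at hA hB
    calc Real.log (u.choose k) ≤ k * Real.log (Real.exp 1 * u / k) := hub
      _ = k * (1 + Real.log u - Real.log k) := by rw [e1]
      _ ≤ β * (n * (Real.log u - Real.log n)) + n * (1 - β * Real.log β) := by nlinarith
      _ ≤ β * Real.log (u.choose n) + n * (1 - β * Real.log β) := by linarith
  -- convert logb
  have h2 : (0:ℝ) < Real.log 2 := Real.log_pos one_lt_two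
  simp only [Real.logb]
  have heq : β * (Real.log (u.choose n) / Real.log 2) +
      (n:ℝ) * (Real.log (Real.exp 1 / β ^ (β : ℝ)) / Real.log 2) =
      (β * Real.log (u.choose n) + n * Real.log (Real.exp 1 / β ^ (β : ℝ))) / Real.log 2 := by
    ring
  rw [heq]
  exact div_le_div_of_nonneg_right key h2.le
end

section
/- For natural numbers n ≤ u and real β with 0 ≤ β ≤ 1, the ratio C(u,n) / C(u, ⌊βn⌋) is at least C(u,n)^{1-β} · (β^β / e)^n. -/
/-! For `k = ⌊βn⌋ ≥ 1` bound `C(u,k) ≤ (eu/k)^k ≤ (eu/(βn))^(βn)`, the map `x ↦ (eu/x)^x` being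
increasing on `(0, u]`, and `C(u,n)^β ≥ (u/n)^(βn)`. The powers of `β` then cancel against
`(β^β)^n`, leaving the factor `e^(-(1-β)n) ≤ 1`. For `k = 0` the bound is trivial. -/

open Real Finset

namespace Nat

theorem pow_le_pow_mul_choose {n u : ℕ} (h : n ≤ u) : u ^ n ≤ n ^ n * u.choose n := by
  have hterm : ∀ i ∈ range n, u * (n - i) ≤ n * (u - i) := by
    intro i hi
    have hin : i ≤ n := (mem_range.mp hi).le
    zify [hin, hin.trans h]
    nlinarith
  have hprod := prod_le_prod' hterm
  rw [prod_mul_distrib, prod_mul_distrib, prod_const, prod_const, card_range,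
    ← descFactorial_eq_prod_range, ← descFactorial_eq_prod_range, descFactorial_self,
    descFactorial_eq_factorial_mul_choose, mul_left_comm, mul_comm (u ^ n)] at hprod
  exact Nat.le_of_mul_le_mul_left hprod n.factorial_pos

theorem div_pow_le_choose {n u : ℕ} (h : n ≤ u) : ((u : ℝ) / n) ^ n ≤ u.choose n := by
  rw [div_pow, div_le_iff₀ (by exact_mod_cast Nat.pow_self_pos), mul_comm]
  exact_mod_cast pow_le_pow_mul_choose h

theorem choose_le_exp_one_mul_div_pow (u k : ℕ) :
    (u.choose k : ℝ) ≤ (exp 1 * u / k) ^ k := by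
  calc (u.choose k : ℝ) ≤ (u : ℝ) ^ k / k.factorial := choose_le_pow_div k u
    _ = (u : ℝ) ^ k / (k : ℝ) ^ k * ((k : ℝ) ^ k / k.factorial) := by field_simp
    _ ≤ (u : ℝ) ^ k / (k : ℝ) ^ k * exp 1 ^ k := by
      rw [← exp_nat_mul, mul_one]
      gcongr
      exact pow_div_factorial_le_exp _ k.cast_nonneg k
    _ = (exp 1 * u / k) ^ k := by rw [div_pow, mul_pow]; ring

end Nat

namespace Real

/-- After taking logs: `x ↦ x (1 + log a - log x)` has derivative `log a - log x ≥ 0` on `(0, a]`. -/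
theorem exp_one_mul_div_rpow_self_le {a s t : ℝ} (hs : 0 < s) (hst : s ≤ t) (hta : t ≤ a) :
    (exp 1 * a / s) ^ s ≤ (exp 1 * a / t) ^ t := by
  have ht : 0 < t := hs.trans_le hst
  have ha : 0 < a := ht.trans_le hta
  rw [← log_le_log_iff (by positivity) (by positivity), log_rpow (by positivity),
    log_rpow (by positivity), log_div (by positivity) hs.ne', log_div (by positivity) ht.ne',
    log_mul (exp_pos 1).ne' ha.ne', log_exp]
  have hlog_ratio : s * (log t - log s) ≤ t - s := by
    have h := log_le_sub_one_of_pos (div_pos ht hs)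
    rw [log_div ht.ne' hs.ne'] at h
    calc s * (log t - log s) ≤ s * (t / s - 1) := mul_le_mul_of_nonneg_left h hs.le
      _ = t - s := by field_simp
  have hlog_le : 0 ≤ (t - s) * (log a - log t) :=
    mul_nonneg (by linarith) (by linarith [log_le_log ht hta])
  nlinarith

theorem rpow_self_div_exp_one_mul_rpow {β : ℝ} (hβ : 0 < β) :
    β ^ β / exp 1 * (exp 1 / β) ^ β = exp (β - 1) := by
  rw [div_rpow (exp_pos 1).le hβ.le, exp_one_rpow, exp_sub]
  have : 0 < β ^ β := rpow_pos_of_pos hβ β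
  field_simp

end Real

theorem choose_floor_mul_le_choose_rpow {n u : ℕ} (hnu : n ≤ u) {β : ℝ} (hβ0 : 0 ≤ β)
    (hβ1 : β ≤ 1) :
    (β ^ β / exp 1) ^ n * u.choose ⌊β * n⌋₊ ≤ (u.choose n : ℝ) ^ β := by
  have hA : (1 : ℝ) ≤ u.choose n := by exact_mod_cast Nat.choose_pos hnu
  set k := ⌊β * n⌋₊
  rcases Nat.eq_zero_or_pos k with hk0 | hkpos
  · have hX : β ^ β / exp 1 ≤ 1 := by
      rw [div_le_one (exp_pos 1)]
      linarith [rpow_le_one hβ0 hβ1 hβ0, add_one_le_exp 1]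
    rw [hk0, Nat.choose_zero_right, Nat.cast_one, mul_one]
    exact (pow_le_one₀ (by positivity) hX).trans (one_le_rpow hA hβ0)
  have hβn : 1 ≤ β * n := Nat.floor_pos.mp hkpos
  have hn : (0 : ℝ) < n := by
    by_contra!
    nlinarith
  have hβ : 0 < β := by nlinarith
  have hk_le : (k : ℝ) ≤ β * n := Nat.floor_le (by positivity)
  have hβn_le : β * n ≤ u := by nlinarith [(Nat.cast_le (α := ℝ)).mpr hnu]
  calc (β ^ β / exp 1) ^ n * u.choose k
      ≤ (β ^ β / exp 1) ^ n * (exp 1 * u / (β * n)) ^ (β * n) := by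
        gcongr
        calc (u.choose k : ℝ) ≤ (exp 1 * u / k) ^ k := Nat.choose_le_exp_one_mul_div_pow u k
          _ = (exp 1 * u / k) ^ (k : ℝ) := (rpow_natCast _ k).symm
          _ ≤ (exp 1 * u / (β * n)) ^ (β * n) :=
            exp_one_mul_div_rpow_self_le (by exact_mod_cast hkpos) hk_le hβn_le
    _ = exp (β - 1) ^ n * ((u : ℝ) / n) ^ (β * n) := by
        rw [show exp 1 * u / (β * n) = exp 1 / β * (u / n) by field_simp,
          mul_rpow (by positivity) (by positivity), ← rpow_self_div_exp_one_mul_rpow hβ, mul_pow,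
          ← rpow_natCast ((exp 1 / β) ^ β), ← rpow_mul (by positivity)]
        ring
    _ ≤ ((u : ℝ) / n) ^ (β * n) := by
        refine mul_le_of_le_one_left (by positivity) (pow_le_one₀ (exp_pos _).le ?_)
        exact exp_le_one_iff.mpr (by linarith)
    _ = (((u : ℝ) / n) ^ n) ^ β := by
        rw [← rpow_natCast, ← rpow_mul (by positivity), mul_comm]
    _ ≤ (u.choose n : ℝ) ^ β := by
        gcongr
        exact Nat.div_pow_le_choose hnu

/-- For naturals n ≤ u and real β ∈ [0,1]:
C(u,n)/C(u,⌊βn⌋) ≥ C(u,n)^(1-β) · (β^β/e)^n, with β^β = 1 when β = 0 (rpow). -/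
theorem stmt1 (n u : ℕ) (hnu : n ≤ u) (β : ℝ) (hβ0 : 0 ≤ β) (hβ1 : β ≤ 1) :
    ((u.choose n : ℝ)) / (u.choose ⌊β * (n : ℝ)⌋₊) ≥
      (u.choose n : ℝ) ^ (1 - β) * (β ^ (β : ℝ) / Real.exp 1) ^ n := by
  have hA : (0 : ℝ) < u.choose n := by exact_mod_cast Nat.choose_pos hnu
  have hkn : ⌊β * n⌋₊ ≤ n :=
    Nat.floor_le_of_le (by nlinarith [(Nat.cast_nonneg (α := ℝ) n)])
  have hB : (0 : ℝ) < u.choose ⌊β * n⌋₊ := by exact_mod_cast Nat.choose_pos (hkn.trans hnu)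
  rw [ge_iff_le, le_div_iff₀ hB, mul_assoc]
  calc (u.choose n : ℝ) ^ (1 - β) * ((β ^ β / exp 1) ^ n * u.choose ⌊β * n⌋₊)
      ≤ (u.choose n : ℝ) ^ (1 - β) * (u.choose n : ℝ) ^ β := by
        gcongr
        exact choose_floor_mul_le_choose_rpow hnu hβ0 hβ1
    _ = u.choose n := by rw [← rpow_add hA, sub_add_cancel, rpow_one]
end

section
/- Let U be a finite set of cardinality u and let n ≤ u. Suppose M : {S ⊆ U : |S| = n} → Σ is a function into a finite set Σ of 'states', and Y : Σ → Set U assigns to each state a 'yes'-set, such that for every S with |S| = n we have Y(M(S)) ⊆ S and |S \ Y(M(S))| ≤ k. Then |Σ| · (Σ_{j=0}^{k} C(u,j)) ≥ C(u,n). -/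
/-!
Since `Y (M S) ⊆ S`, the dataset is recovered as `S = Y (M S) ∪ (S \ Y (M S))`, so
`S ↦ (M S, S \ Y (M S))` is injective on the `n`-subsets. Its image lies among the pairs of a state
and a subset of size at most `k`, of which there are `|σ| · ∑_{j ≤ k} C(u, j)`.
-/

open Finset

theorem card_filter_card_le_eq_sum_choose (α : Type*) [Fintype α] (k : ℕ) :
    #{T : Finset α | T.card ≤ k} = ∑ j ∈ range (k + 1), (Fintype.card α).choose j := by
  classical
  rw [card_eq_sum_card_fiberwise (f := card) (t := range (k + 1))
    fun T hT => mem_range_succ_iff.mpr (mem_filter.mp hT).2]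
  refine sum_congr rfl fun j hj => ?_
  rw [filter_filter, ← card_univ, ← card_powersetCard]
  congr 1
  ext T
  simp only [mem_filter, mem_univ, true_and, mem_powersetCard_univ, and_iff_right_iff_imp]
  rintro rfl
  exact mem_range_succ_iff.mp hj

theorem injOn_state_sdiff {α σ : Type*} [DecidableEq α] (M : Finset α → σ) (Y : σ → Finset α) :
    Set.InjOn (fun S => (M S, S \ Y (M S))) {S | Y (M S) ⊆ S} := by
  intro S hS T hT h
  obtain ⟨hM, hD⟩ := Prod.mk.inj h
  calc S = Y (M S) ∪ (S \ Y (M S)) := (union_sdiff_of_subset hS).symm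
    _ = Y (M T) ∪ (T \ Y (M T)) := by rw [hD, hM]
    _ = T := union_sdiff_of_subset hT

theorem stmt3_general {α σ : Type*} [Fintype α] [Fintype σ] (u n k : ℕ)
    (hu : Fintype.card α = u)
    (M : Finset α → σ) (Y : σ → Set α)
    (hY : ∀ S : Finset α, S.card = n → Y (M S) ⊆ ↑S)
    (hk : ∀ S : Finset α, S.card = n → ((↑S : Set α) \ Y (M S)).ncard ≤ k) :
    u.choose n ≤ Fintype.card σ * ∑ j ∈ Finset.range (k + 1), u.choose j := by
  classical
  subst hu
  set Y' : σ → Finset α := fun s => (Y s).toFinset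
  have hncard (S : Finset α) : ((↑S : Set α) \ Y (M S)).ncard = #(S \ Y' (M S)) := by
    rw [← Set.ncard_coe_finset, coe_sdiff, Set.coe_toFinset]
  have hmaps : ∀ S ∈ powersetCard n univ,
      (M S, S \ Y' (M S)) ∈ univ ×ˢ ({T : Finset α | T.card ≤ k} : Finset _) := by
    intro S hS
    rw [mem_powersetCard_univ] at hS
    simpa [← hncard] using hk S hS
  have hinj : Set.InjOn (fun S => (M S, S \ Y' (M S))) ↑(powersetCard n (univ : Finset α)) :=
    (injOn_state_sdiff M Y').mono fun S hS => by
      simpa [Y'] using hY S (mem_powersetCard_univ.mp (mem_coe.mp hS))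
  simpa [card_powersetCard, card_filter_card_le_eq_sum_choose] using
    card_le_card_of_injOn _ hmaps hinj

/-- Counting core of the static-filter lower bound: if each state's yes-set
satisfies Y(M S) ⊆ S and |S \ Y(M S)| ≤ k for every n-subset S, then
|Σ| · Σ_{j=0}^{k} C(u,j) ≥ C(u,n). -/
theorem stmt3 {α σ : Type*} [Fintype α] [Fintype σ] (u n k : ℕ)
    (hu : Fintype.card α = u) (hnu : n ≤ u)
    (M : Finset α → σ) (Y : σ → Set α)
    (hY : ∀ S : Finset α, S.card = n → Y (M S) ⊆ ↑S)
    (hk : ∀ S : Finset α, S.card = n → ((↑S : Set α) \ Y (M S)).ncard ≤ k) :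
    u.choose n ≤ Fintype.card σ * ∑ j ∈ Finset.range (k + 1), u.choose j :=
  stmt3_general u n k hu M Y hY hk
end

section
/- Let U be a finite set with |U| = u, let n ≤ u, and let k < u/2. Suppose Σ is a finite set and M : {S ⊆ U : |S| = n} → Σ, Y : Σ → Set U satisfy Y(M(S)) ⊆ S and |S \ Y(M(S))| ≤ k for all S of size n. Then log₂ |Σ| ≥ log₂ C(u,n) - log₂ C(u,k) - log₂(k+1). -/
/-- Deterministic static-filter space lower bound:
log₂|Σ| ≥ log₂ C(u,n) − log₂ C(u,k) − log₂(k+1), for k < u/2. -/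
theorem stmt4 {α σ : Type*} [Fintype α] [Fintype σ] (u n k : ℕ)
    (hu : Fintype.card α = u) (hnu : n ≤ u) (hk2 : (k : ℝ) < (u : ℝ) / 2)
    (M : Finset α → σ) (Y : σ → Set α)
    (hY : ∀ S : Finset α, S.card = n → Y (M S) ⊆ ↑S)
    (hk : ∀ S : Finset α, S.card = n → ((↑S : Set α) \ Y (M S)).ncard ≤ k) :
    Real.logb 2 (u.choose n) - Real.logb 2 (u.choose k) - Real.logb 2 (k + 1) ≤
      Real.logb 2 (Fintype.card σ) := by
  classical
  have hσ : 0 < Fintype.card σ := Fintype.card_pos_iff.mpr ⟨M ∅⟩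
  have h2k : 2 * k < u := by
    have : (2 * k : ℝ) < u := by linarith
    exact_mod_cast this
  have hku2 : k ≤ u / 2 := Nat.le_div_iff_mul_le (by norm_num) |>.mpr (by omega)
  have hku : k ≤ u := by omega
  -- monotonicity of choose below the middle
  have mono : ∀ j, j ≤ k → u.choose j ≤ u.choose k := by
    intro j hj
    induction hj using Nat.decreasingInduction with
    | self => exact le_rfl
    | of_succ m hm ih =>
        exact (Nat.choose_le_succ_of_lt_half_left (lt_of_lt_of_le hm hku2)).trans ih
  -- the counting argument
  set A : Finset (Finset α) := Finset.powersetCard n Finset.univ with hA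
  set B : Finset (Finset α) :=
    (Finset.range (k + 1)).biUnion (fun j => Finset.powersetCard j Finset.univ) with hB
  set g : Finset α → σ × Finset α :=
    fun S => (M S, S.filter (fun x => x ∉ Y (M S))) with hg
  have hTcoe : ∀ S : Finset α,
      ((S.filter (fun x => x ∉ Y (M S)) : Finset α) : Set α) = (↑S : Set α) \ Y (M S) := by
    intro S; ext x; simp [Set.mem_diff]
  have hmaps : ∀ S ∈ A, g S ∈ Finset.univ ×ˢ B := by
    intro S hS
    have hScard : S.card = n := (Finset.mem_powersetCard.mp hS).2
    have hTk : (S.filter (fun x => x ∉ Y (M S))).card ≤ k := by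
      have := hk S hScard
      rwa [← hTcoe S, Set.ncard_coe_finset] at this
    refine Finset.mem_product.mpr ⟨Finset.mem_univ _, ?_⟩
    refine Finset.mem_biUnion.mpr ⟨(S.filter (fun x => x ∉ Y (M S))).card,
      Finset.mem_range.mpr (by omega), ?_⟩
    exact Finset.mem_powersetCard_univ.mpr rfl
  have hinj : Set.InjOn g A := by
    intro S₁ h₁ S₂ h₂ hEq
    have hc₁ : S₁.card = n := (Finset.mem_powersetCard.mp h₁).2
    have hc₂ : S₂.card = n := (Finset.mem_powersetCard.mp h₂).2
    have hM : M S₁ = M S₂ := congrArg Prod.fst hEq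
    have hT : S₁.filter (fun x => x ∉ Y (M S₁)) = S₂.filter (fun x => x ∉ Y (M S₂)) :=
      congrArg Prod.snd hEq
    apply Finset.coe_injective
    have e₁ : (↑S₁ : Set α) = Y (M S₁) ∪ ((↑S₁ : Set α) \ Y (M S₁)) :=
      (Set.union_diff_cancel (hY S₁ hc₁)).symm
    have e₂ : (↑S₂ : Set α) = Y (M S₂) ∪ ((↑S₂ : Set α) \ Y (M S₂)) :=
      (Set.union_diff_cancel (hY S₂ hc₂)).symm
    rw [e₁, e₂, ← hTcoe S₁, ← hTcoe S₂, hT, hM]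
  have hcard : u.choose n ≤ Fintype.card σ * ((k + 1) * u.choose k) := by
    have h1 : A.card ≤ (Finset.univ ×ˢ B).card :=
      Finset.card_le_card_of_injOn g hmaps hinj
    have hAcard : A.card = u.choose n := by
      rw [hA, Finset.card_powersetCard, Finset.card_univ, hu]
    have hBcard : B.card ≤ (k + 1) * u.choose k := by
      calc B.card ≤ ∑ j ∈ Finset.range (k + 1), (Finset.powersetCard j (Finset.univ : Finset α)).card :=
            Finset.card_biUnion_le
        _ = ∑ j ∈ Finset.range (k + 1), u.choose j := by
            simp [Finset.card_powersetCard, Finset.card_univ, hu]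
        _ ≤ ∑ _j ∈ Finset.range (k + 1), u.choose k := by
            refine Finset.sum_le_sum fun j hj => mono j (by
              have := Finset.mem_range.mp hj; omega)
        _ = (k + 1) * u.choose k := by
            rw [Finset.sum_const, Finset.card_range, smul_eq_mul]
    have hprod : ((Finset.univ : Finset σ) ×ˢ B).card = Fintype.card σ * B.card := by
      rw [Finset.card_product, Finset.card_univ]
    calc u.choose n = A.card := hAcard.symm
      _ ≤ Fintype.card σ * B.card := by rw [← hprod]; exact h1
      _ ≤ Fintype.card σ * ((k + 1) * u.choose k) :=
          Nat.mul_le_mul_left _ hBcard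
  -- pass to logarithms
  have hn0 : (0 : ℝ) < u.choose n := by exact_mod_cast Nat.choose_pos hnu
  have hk0 : (0 : ℝ) < u.choose k := by exact_mod_cast Nat.choose_pos hku
  have hσ0 : (0 : ℝ) < Fintype.card σ := by exact_mod_cast hσ
  have hk10 : (0 : ℝ) < (k : ℝ) + 1 := by positivity
  have hcardR : (u.choose n : ℝ) ≤ (Fintype.card σ : ℝ) * (((k : ℝ) + 1) * u.choose k) := by
    exact_mod_cast hcard
  have hlog : Real.logb 2 (u.choose n) ≤
      Real.logb 2 ((Fintype.card σ : ℝ) * (((k : ℝ) + 1) * u.choose k)) :=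
    Real.logb_le_logb_of_le (by norm_num) hn0 hcardR
  rw [Real.logb_mul (ne_of_gt hσ0) (by positivity),
      Real.logb_mul (ne_of_gt hk10) (ne_of_gt hk0)] at hlog
  linarith
end

section
/- Model a deterministic dynamic filter as: a set of states Σ with a distinguished initial state m₀, transition functions ins, del : Σ × U → Σ, and a yes-set function Y : Σ → Set U. For a finite sequence of elements, let M(+S) denote the state after inserting the elements of S (in ascending order) starting from m₀, and M(+S,−T) the state after additionally deleting the elements of T (in ascending order). Say the filter is witness-based if for all states M reachable as M(+S) for some n-subset S, and all x: x ∈ Y(M) iff there exists an n-subset T with x ∈ T and M(+T) = M. Then for a witness-based filter in which every x ∈ T satisfies x ∈ Y(M(+T, −R)) whenever x ∉ R (no false negatives), and for every n-subset S: Y(M(+S)) \ S ⊆ Y(M(+S, −S)). -/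
/-- Apply the transition function `f` to state `m` on the elements of `S` in ascending order. -/
def applyAsc {α σ : Type*} [LinearOrder α] (f : σ → α → σ) (m : σ) (S : Finset α) : σ :=
  (S.sort (· ≤ ·)).foldl f m

/-- Sticky False-Positives Lemma (deterministic abstraction): for a witness-based
filter with no false negatives, every false positive of M(+S) is still a 'yes'
after deleting all of S: Y(M(+S)) \ S ⊆ Y(M(+S,−S)). -/
theorem stmt8 {α σ : Type*} [LinearOrder α] [Fintype α]
    (m₀ : σ) (ins del : σ → α → σ) (Y : σ → Set α) (n : ℕ)
    (hwb : ∀ S : Finset α, S.card = n → ∀ x : α,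
      x ∈ Y (applyAsc ins m₀ S) ↔
        ∃ T : Finset α, T.card = n ∧ x ∈ T ∧ applyAsc ins m₀ T = applyAsc ins m₀ S)
    (hnfn : ∀ (T R : Finset α), T.card = n → ∀ x ∈ T, x ∉ R →
      x ∈ Y (applyAsc del (applyAsc ins m₀ T) R)) :
    ∀ S : Finset α, S.card = n →
      Y (applyAsc ins m₀ S) \ ↑S ⊆ Y (applyAsc del (applyAsc ins m₀ S) S) := by
  intro S hS x hx
  obtain ⟨hxY, hxS⟩ := hx
  obtain ⟨T, hT, hxT, hTS⟩ := (hwb S hS x).mp hxY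
  have := hnfn T S hT x hxT hxS
  rwa [hTS] at this
end

section
/- In the deterministic dynamic-filter model (states Σ, transitions ins/del, yes-sets Y, states M(+S) and M(+S,−S) as above), assume the sticky false-positive property: for every n-subset S, Y(M(+S)) \ S ⊆ Y(M(+S,−S)); and assume no false negatives: S ⊆ Y(M(+S)) for every n-subset S. Define the derived static filter with state σ(S) = (M(+S), M(+S,−S)) and yes-set Y'(M₁,M₂) = Y(M₁) \ Y(M₂). Then for every n-subset S: (a) Y'(σ(S)) ⊆ S (no false positives), and (b) S \ Y'(σ(S)) ⊆ S ∩ Y(M(+S,−S)). -/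
/-- Reduction correctness (deterministic core): given sticky false positives and no
false negatives, the derived static filter with state (M(+S), M(+S,−S)) and yes-set
Y(M₁) \ Y(M₂) has (a) no false positives, and (b) its false negatives on S are
contained in S ∩ Y(M(+S,−S)). -/
theorem stmt9 {α σ : Type*} [LinearOrder α] [Fintype α]
    (m₀ : σ) (ins del : σ → α → σ) (Y : σ → Set α) (n : ℕ)
    (hsticky : ∀ S : Finset α, S.card = n →
      Y (applyAsc ins m₀ S) \ ↑S ⊆ Y (applyAsc del (applyAsc ins m₀ S) S))
    (hnfn : ∀ S : Finset α, S.card = n → ↑S ⊆ Y (applyAsc ins m₀ S)) :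
    ∀ S : Finset α, S.card = n →
      (Y (applyAsc ins m₀ S) \ Y (applyAsc del (applyAsc ins m₀ S) S) ⊆ ↑S) ∧
      (↑S \ (Y (applyAsc ins m₀ S) \ Y (applyAsc del (applyAsc ins m₀ S) S)) ⊆
        ↑S ∩ Y (applyAsc del (applyAsc ins m₀ S) S)) := by
  intro S hS
  constructor
  · intro x hx
    by_contra hxS
    exact hx.2 (hsticky S hS ⟨hx.1, hxS⟩)
  · intro x hx
    refine ⟨hx.1, ?_⟩
    by_contra h
    exact hx.2 ⟨hnfn S hS hx.1, h⟩
end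

section
/- Combining the reduction with the counting bound: let Σ be a finite state set, and suppose for every n-subset S of a u-element universe we have a pair (M₁(S), M₂(S)) ∈ Σ × Σ and yes-sets Y : Σ → Set U such that (Y(M₁(S)) \ Y(M₂(S))) ⊆ S and |S \ (Y(M₁(S)) \ Y(M₂(S)))| ≤ k with k < u/2. Then 2·log₂|Σ| ≥ log₂ C(u,n) − log₂ C(u,k) − log₂(k+1). -/
/-!
Write `D S := Y (M₁ S) \ Y (M₂ S)`. Since `D S ⊆ S`, the set `S` is recovered from the pair of
states `(M₁ S, M₂ S)` together with the small set `S \ D S` of at most `k` false negatives.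
Hence `C(u, n) ≤ |Σ|² · ∑_{j ≤ k} C(u, j) ≤ |Σ|² · (k + 1) · C(u, k)`, the last step because
`j ↦ C(u, j)` increases up to `u / 2`; taking `log₂` gives the bound.
-/

open Finset

namespace Nat

theorem choose_le_choose_of_le_of_le_half {n j k : ℕ} (hjk : j ≤ k) (hk : k ≤ n / 2) :
    n.choose j ≤ n.choose k := by
  induction hjk using decreasingInduction with
  | self => rfl
  | of_succ i hi ih => exact (choose_le_succ_of_lt_half_left (by omega)).trans ih

theorem sum_range_choose_le_mul_choose {n k : ℕ} (hk : k ≤ n / 2) :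
    ∑ j ∈ range (k + 1), n.choose j ≤ (k + 1) * n.choose k := by
  simpa using sum_le_card_nsmul (range (k + 1)) (n.choose ·) (n.choose k)
    fun j hj ↦ choose_le_choose_of_le_of_le_half (mem_range_succ_iff.mp hj) hk

end Nat

section Encoding

variable {α β : Type*} [Fintype α]

theorem card_filter_card_le_le_sum_choose (k : ℕ) :
    #{T : Finset α | #T ≤ k} ≤ ∑ j ∈ range (k + 1), (Fintype.card α).choose j := by
  classical
  calc #{T : Finset α | #T ≤ k}
      ≤ #((range (k + 1)).biUnion fun j ↦ powersetCard j (univ : Finset α)) := by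
        refine card_le_card fun T hT ↦ mem_biUnion.mpr ⟨#T, ?_, mem_powersetCard.mpr ⟨?_, rfl⟩⟩
        · exact mem_range_succ_iff.mpr (mem_filter.mp hT).2
        · exact subset_univ T
    _ ≤ ∑ j ∈ range (k + 1), #(powersetCard j (univ : Finset α)) := card_biUnion_le
    _ = ∑ j ∈ range (k + 1), (Fintype.card α).choose j := by simp only [card_powersetCard, card_univ]

theorem card_le_card_mul_card_filter_card_le [Fintype β] (s : Finset (Finset α)) (k : ℕ)
    (code : Finset α → β) (Y : β → Set α) (hsub : ∀ S ∈ s, Y (code S) ⊆ S)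
    (hmiss : ∀ S ∈ s, ((S : Set α) \ Y (code S)).ncard ≤ k) :
    #s ≤ Fintype.card β * #{T : Finset α | #T ≤ k} := by
  classical
  let missed (S : Finset α) : Finset α := {a ∈ S | a ∉ Y (code S)}
  have hmissed (S : Finset α) : (missed S : Set α) = (S : Set α) \ Y (code S) := by
    ext a; simp [missed]
  have hrecover : ∀ S ∈ s, S = (Y (code S)).toFinset ∪ missed S := by
    intro S hS
    ext a
    by_cases ha : a ∈ Y (code S)
    · simpa [missed, ha] using hsub S hS ha
    · simp [missed, ha]
  calc #s ≤ #(univ ×ˢ ({T : Finset α | #T ≤ k} : Finset (Finset α))) := by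
        refine card_le_card_of_injOn (fun S ↦ (code S, missed S)) (fun S hS ↦ ?_) ?_
        · simpa [← Set.ncard_coe_finset, hmissed] using hmiss S hS
        · intro S hS T hT hST
          simp only [Prod.mk.injEq] at hST
          rw [hrecover S hS, hrecover T hT, hST.1, hST.2]
    _ = Fintype.card β * #{T : Finset α | #T ≤ k} := by rw [card_product, card_univ]

end Encoding

theorem Real.logb_sub_sub_le_two_mul_logb {a b c s : ℕ} (hb : 0 < b) (hc : 0 < c)
    (h : a ≤ s ^ 2 * (c * b)) :
    Real.logb 2 a - Real.logb 2 b - Real.logb 2 c ≤ 2 * Real.logb 2 s := by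
  have hb' : (0 : ℝ) ≤ Real.logb 2 b := Real.logb_nonneg one_lt_two (by exact_mod_cast hb)
  have hc' : (0 : ℝ) ≤ Real.logb 2 c := Real.logb_nonneg one_lt_two (by exact_mod_cast hc)
  rcases Nat.eq_zero_or_pos a with rfl | ha
  · have : (0 : ℝ) ≤ Real.logb 2 s := by
      rcases Nat.eq_zero_or_pos s with rfl | hs
      · simp
      · exact Real.logb_nonneg one_lt_two (by exact_mod_cast hs)
    simp only [CharP.cast_eq_zero, Real.logb_zero]
    linarith
  have hs : 0 < s := by
    rcases Nat.eq_zero_or_pos s with rfl | hs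
    · simp at h; omega
    · exact hs
  have hlog : Real.logb 2 a ≤ Real.logb 2 ((s : ℝ) ^ 2 * (c * b)) :=
    Real.logb_le_logb_of_le one_lt_two (by exact_mod_cast ha) (by exact_mod_cast h)
  rw [Real.logb_mul (by positivity) (by positivity), Real.logb_mul (by positivity) (by positivity),
    Real.logb_pow] at hlog
  push_cast at hlog
  linarith

theorem stmt10_general {α σ : Type*} [Fintype α] [Fintype σ] (u n k : ℕ)
    (hu : Fintype.card α = u) (hk2 : (k : ℝ) < (u : ℝ) / 2)
    (M₁ M₂ : Finset α → σ) (Y : σ → Set α)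
    (h1 : ∀ S : Finset α, S.card = n → Y (M₁ S) \ Y (M₂ S) ⊆ ↑S)
    (h2 : ∀ S : Finset α, S.card = n →
      ((↑S : Set α) \ (Y (M₁ S) \ Y (M₂ S))).ncard ≤ k) :
    Real.logb 2 (u.choose n) - Real.logb 2 (u.choose k) - Real.logb 2 (k + 1) ≤
      2 * Real.logb 2 (Fintype.card σ) := by
  have hk : k ≤ u / 2 := by
    rw [Nat.le_div_iff_mul_le two_pos]
    exact_mod_cast (lt_div_iff₀ two_pos).mp hk2 |>.le
  have hcount : u.choose n ≤ Fintype.card σ ^ 2 * ((k + 1) * u.choose k) := by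
    have := card_le_card_mul_card_filter_card_le (powersetCard n univ) k
      (fun S ↦ (M₁ S, M₂ S)) (fun p ↦ Y p.1 \ Y p.2)
      (fun S hS ↦ h1 S (mem_powersetCard.mp hS).2) (fun S hS ↦ h2 S (mem_powersetCard.mp hS).2)
    rw [card_powersetCard, card_univ, hu, Fintype.card_prod, ← sq] at this
    calc u.choose n ≤ _ := this
      _ ≤ _ := Nat.mul_le_mul_left _ <| (card_filter_card_le_le_sum_choose k).trans <| by
          simpa only [hu] using Nat.sum_range_choose_le_mul_choose hk
  exact_mod_cast Real.logb_sub_sub_le_two_mul_logb (Nat.choose_pos (by omega)) k.succ_pos hcount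

/-- Main deterministic lower bound: if for every n-subset S a pair of states
(M₁ S, M₂ S) ∈ Σ × Σ with yes-sets Y satisfies Y(M₁S) \ Y(M₂S) ⊆ S and
|S \ (Y(M₁S) \ Y(M₂S))| ≤ k with k < u/2, then
2·log₂|Σ| ≥ log₂ C(u,n) − log₂ C(u,k) − log₂(k+1). -/
theorem stmt10 {α σ : Type*} [Fintype α] [Fintype σ] (u n k : ℕ)
    (hu : Fintype.card α = u) (hnu : n ≤ u) (hk2 : (k : ℝ) < (u : ℝ) / 2)
    (M₁ M₂ : Finset α → σ) (Y : σ → Set α)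
    (h1 : ∀ S : Finset α, S.card = n → Y (M₁ S) \ Y (M₂ S) ⊆ ↑S)
    (h2 : ∀ S : Finset α, S.card = n →
      ((↑S : Set α) \ (Y (M₁ S) \ Y (M₂ S))).ncard ≤ k) :
    Real.logb 2 (u.choose n) - Real.logb 2 (u.choose k) - Real.logb 2 (k + 1) ≤
      2 * Real.logb 2 (Fintype.card σ) :=
  stmt10_general u n k hu hk2 M₁ M₂ Y h1 h2
end

section
/- Suppose a static filter design maps each n-subset S of a u-element universe to one of 2^s states such that the state exactly determines a set Y ⊆ S (the 'yes' answers), and call a dataset S 'good' if |S \ Y| ≤ αεn. If the good datasets number at least (1 − 1/α − p)·C(u,n), then 2^s · Σ_{j≤⌊αεn⌋} C(u,j) ≥ (1 − 1/α − p)·C(u,n). -/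
open Classical in
/-- Static-filter counting inequality for a fixed 'magic' random string:
if each good n-subset S (|S \ Y(M S)| ≤ αεn, Y(M S) ⊆ S) maps to one of 2^s states,
and good datasets number at least (1 − 1/α − p)·C(u,n), then
2^s · Σ_{j ≤ ⌊αεn⌋} C(u,j) ≥ (1 − 1/α − p)·C(u,n). -/
theorem stmt15 {β : Type*} [Fintype β] (u n s : ℕ) (hu : Fintype.card β = u)
    (α ε p : ℝ) (hα : 1 < α) (hε0 : 0 ≤ ε) (hε1 : ε ≤ 1)
    (hp0 : 0 ≤ p) (hp1 : p ≤ 1)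
    (M : Finset β → Fin (2 ^ s)) (Y : Fin (2 ^ s) → Set β) (G : Finset β → Prop)
    (hgood : ∀ S : Finset β, S.card = n → G S →
      Y (M S) ⊆ ↑S ∧ ((↑S : Set β) \ Y (M S)).ncard ≤ ⌊α * ε * n⌋₊)
    (hcount : (1 - 1 / α - p) * (u.choose n : ℝ) ≤
      ((Finset.univ.filter (fun S : Finset β => S.card = n ∧ G S)).card : ℝ)) :
    (1 - 1 / α - p) * (u.choose n : ℝ) ≤
      (2 ^ s : ℝ) * ∑ j ∈ Finset.range (⌊α * ε * n⌋₊ + 1), (u.choose j : ℝ) := by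
  classical
  set k := ⌊α * ε * n⌋₊ with hk
  set A := Finset.univ.filter (fun S : Finset β => S.card = n ∧ G S) with hA
  set f : Finset β → Fin (2 ^ s) × Finset β :=
    fun S => (M S, S.filter (fun x => x ∉ Y (M S))) with hf
  -- coercion of the filter is the set difference
  have hcoe : ∀ S : Finset β,
      ((S.filter (fun x => x ∉ Y (M S)) : Finset β) : Set β) = (↑S : Set β) \ Y (M S) := by
    intro S
    ext x
    simp [Set.mem_diff]
  -- injectivity on A
  have hinj : Set.InjOn f A := by
    intro S hS S' hS' hEq
    simp only [hA, Finset.coe_filter, Set.mem_setOf_eq, Finset.mem_univ, true_and] at hS hS'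
    obtain ⟨hYsub, _⟩ := hgood S hS.1 hS.2
    obtain ⟨hYsub', _⟩ := hgood S' hS'.1 hS'.2
    have h1 : M S = M S' := congrArg Prod.fst hEq
    have h2 : S.filter (fun x => x ∉ Y (M S)) = S'.filter (fun x => x ∉ Y (M S')) :=
      congrArg Prod.snd hEq
    ext x
    constructor
    · intro hx
      by_cases hy : x ∈ Y (M S)
      · have : x ∈ (↑S' : Set β) := hYsub' (h1 ▸ hy)
        exact this
      · have : x ∈ S'.filter (fun z => z ∉ Y (M S')) := h2 ▸ Finset.mem_filter.2 ⟨hx, hy⟩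
        exact (Finset.mem_filter.1 this).1
    · intro hx
      by_cases hy : x ∈ Y (M S')
      · have : x ∈ (↑S : Set β) := hYsub (h1 ▸ hy)
        exact this
      · have : x ∈ S.filter (fun z => z ∉ Y (M S)) :=
          h2 ▸ Finset.mem_filter.2 ⟨hx, hy⟩
        exact (Finset.mem_filter.1 this).1
  -- the image lands in states × small sets
  set B : Finset (Fin (2 ^ s) × Finset β) :=
    Finset.univ ×ˢ (Finset.univ.filter (fun T : Finset β => T.card ≤ k)) with hB
  have hmaps : ∀ S ∈ A, f S ∈ B := by
    intro S hS
    simp only [hA, Finset.mem_filter, Finset.mem_univ, true_and] at hS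
    obtain ⟨_, hle⟩ := hgood S hS.1 hS.2
    have hcard : (S.filter (fun x => x ∉ Y (M S))).card ≤ k := by
      have := hcoe S
      have hn : ((↑S : Set β) \ Y (M S)).ncard = (S.filter (fun x => x ∉ Y (M S))).card := by
        rw [← this, Set.ncard_coe_finset]
      omega
    simp [hB, hf, hcard]
  have hcardle : A.card ≤ B.card := Finset.card_le_card_of_injOn f hmaps hinj
  -- count B
  have hBcard : B.card = 2 ^ s * ∑ j ∈ Finset.range (k + 1), u.choose j := by
    rw [hB, Finset.card_product, Finset.card_univ, Fintype.card_fin]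
    congr 1
    have : (Finset.univ.filter (fun T : Finset β => T.card ≤ k)) =
        (Finset.range (k + 1)).biUnion (fun j => Finset.powersetCard j Finset.univ) := by
      ext T
      simp [Finset.mem_powersetCard, Nat.lt_succ_iff]
    rw [this, Finset.card_biUnion]
    · refine Finset.sum_congr rfl fun j _ => ?_
      rw [Finset.card_powersetCard, Finset.card_univ, hu]
    · intro i hi j hj hij
      simp only [Finset.disjoint_left, Finset.mem_powersetCard]
      rintro T ⟨_, hT1⟩ ⟨_, hT2⟩
      exact hij (hT1.symm.trans hT2)
  calc (1 - 1 / α - p) * (u.choose n : ℝ) ≤ (A.card : ℝ) := hcount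
    _ ≤ (B.card : ℝ) := by exact_mod_cast hcardle
    _ = (2 ^ s : ℝ) * ∑ j ∈ Finset.range (k + 1), (u.choose j : ℝ) := by
        rw [hBcard]; push_cast; ring
end
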